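/- arXiv:1503.04406 — 7 statements merged into one kernel-verified Lean document; each statement's English description precedes it below -/
import Mathlib

section
/- Let G be a looped simple graph. For each vertex v, the neighborhood circuit ζ(v) — equal to {χ(v)} ∪ {φ(w) : w ∈ N(v)} if v is unlooped, and {ψ(v)} ∪ {φ(w) : w ∈ N(v)} if v is looped — is a circuit of the isotropic matroid M[IAS(G)], provided v is not isolated. -/
/-- Columns of `IAS(G) = (I | A | A+I)` over GF(2). -/
def iasCol {V : Type} [DecidableEq V] (A : Matrix V V (ZMod 2)) :
    V ⊕ V ⊕ V → V → ZMod 2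
  | Sum.inl v => fun w => if w = v then 1 else 0
  | Sum.inr (Sum.inl v) => fun w => A w v
  | Sum.inr (Sum.inr v) => fun w => A w v + (if w = v then 1 else 0)

/-- A set of ground-set elements is independent when the corresponding columns are
linearly independent over GF(2). -/
def iasIndep {V : Type} [DecidableEq V] (A : Matrix V V (ZMod 2))
    (S : Set (V ⊕ V ⊕ V)) : Prop :=
  LinearIndependent (ZMod 2) (S.restrict (iasCol A))

/-- The neighborhood circuit `ζ(v)`: `{χ(v)} ∪ {φ(w) : w ∈ N(v)}` if `v` is unlooped,
and `{ψ(v)} ∪ {φ(w) : w ∈ N(v)}` if `v` is looped. -/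
def neighborhoodCircuit {V : Type} [DecidableEq V] (A : Matrix V V (ZMod 2)) (v : V) :
    Set (V ⊕ V ⊕ V) :=
  insert (if A v v = 0 then Sum.inr (Sum.inl v) else Sum.inr (Sum.inr v))
    ((fun w => Sum.inl w) '' {w | w ≠ v ∧ A w v = 1})

/-!
The columns `φ(w)` are the unit vectors `e_w`, and the column of `χ(v)` (resp. `ψ(v)`, for a
looped `v`) is the indicator vector of `N(v)`. So the head of `ζ(v)` lies in the span of
`{φ(w) : w ∈ T}` exactly when `N(v) ⊆ T`: this makes `ζ(v)` dependent, while deleting any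
element of `ζ(v)` leaves either unit vectors only, or a head outside the span of the rest.
-/

open Set Submodule

variable {V : Type} [DecidableEq V] (A : Matrix V V (ZMod 2)) (v : V)

def openNeighborhood : Set V := {w | w ≠ v ∧ A w v = 1}

def neighborhoodCircuitHead : V ⊕ V ⊕ V :=
  if A v v = 0 then Sum.inr (Sum.inl v) else Sum.inr (Sum.inr v)

theorem neighborhoodCircuit_eq_insert :
    neighborhoodCircuit A v =
      insert (neighborhoodCircuitHead A v) (Sum.inl '' openNeighborhood A v) := rfl

theorem zmodTwo_ne_zero_iff (x : ZMod 2) : x ≠ 0 ↔ x = 1 := by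
  revert x; decide

theorem iasIndep_iff_linearIndepOn (S : Set (V ⊕ V ⊕ V)) :
    iasIndep A S ↔ LinearIndepOn (ZMod 2) (iasCol A) S := Iff.rfl

variable {A} in
theorem iasIndep.mono {S T : Set (V ⊕ V ⊕ V)} (hT : iasIndep A T) (hST : S ⊆ T) :
    iasIndep A S :=
  LinearIndepOn.mono hT hST

theorem iasCol_inl (w : V) : iasCol A (Sum.inl w) = Pi.single w 1 := by
  funext u
  simp [iasCol, Pi.single_apply]

theorem iasIndep_inl_image (T : Set V) : iasIndep A (Sum.inl '' T) := by
  rw [iasIndep_iff_linearIndepOn]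
  refine LinearIndepOn.image_of_comp Sum.inl (iasCol A) ?_
  simpa only [Function.comp_def, iasCol_inl] using
    (Pi.linearIndependent_single_one V (ZMod 2)).linearIndepOn T

/-- For a looped `v` the `1` of `A` at `(v, v)` cancels the `1` of `I`. -/
theorem iasCol_neighborhoodCircuitHead_ne_zero_iff (u : V) :
    iasCol A (neighborhoodCircuitHead A v) u ≠ 0 ↔ u ∈ openNeighborhood A v := by
  unfold neighborhoodCircuitHead openNeighborhood
  split_ifs <;> by_cases hu : u = v <;> simp_all [iasCol, zmodTwo_ne_zero_iff]

theorem iasCol_neighborhoodCircuitHead_mem_span_iff [Fintype V] (T : Set V) :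
    iasCol A (neighborhoodCircuitHead A v) ∈ span (ZMod 2) (iasCol A '' (Sum.inl '' T)) ↔
      openNeighborhood A v ⊆ T := by
  have hcols : iasCol A '' (Sum.inl '' T) = Pi.basisFun (ZMod 2) V '' T := by
    simp only [image_image, iasCol_inl, Pi.basisFun_apply]
  rw [hcols, Module.Basis.mem_span_image]
  simp only [Set.subset_def, Finset.mem_coe, Finsupp.mem_support_iff, Pi.basisFun_repr,
    iasCol_neighborhoodCircuitHead_ne_zero_iff]

theorem iasIndep_insert_neighborhoodCircuitHead_iff [Fintype V] (T : Set V) :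
    iasIndep A (insert (neighborhoodCircuitHead A v) (Sum.inl '' T)) ↔
      ¬ openNeighborhood A v ⊆ T := by
  have hhead : neighborhoodCircuitHead A v ∉ Sum.inl '' T := by
    unfold neighborhoodCircuitHead; split_ifs <;> simp
  rw [iasIndep_iff_linearIndepOn, linearIndepOn_insert hhead,
    iasCol_neighborhoodCircuitHead_mem_span_iff]
  exact and_iff_right (iasIndep_inl_image A T)

theorem iasIndep_of_ssubset_neighborhoodCircuit [Fintype V] {S : Set (V ⊕ V ⊕ V)}
    (hS : S ⊂ neighborhoodCircuit A v) : iasIndep A S := by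
  rw [neighborhoodCircuit_eq_insert, ssubset_iff_exists] at hS
  obtain ⟨hSζ, x, hx, hxS⟩ := hS
  rcases hx with rfl | ⟨w, hw, rfl⟩
  · rw [subset_insert_iff_of_notMem hxS] at hSζ
    exact (iasIndep_inl_image A _).mono hSζ
  · have hS_sub :
        S ⊆ insert (neighborhoodCircuitHead A v) (Sum.inl '' {u | Sum.inl u ∈ S}) := by
      intro y hy
      rcases hSζ hy with h | ⟨u, -, rfl⟩
      · exact Or.inl h
      · exact Or.inr ⟨u, hy, rfl⟩
    refine ((iasIndep_insert_neighborhoodCircuitHead_iff A v _).2 ?_).mono hS_sub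
    exact fun hN => hxS (hN hw)

theorem neighborhood_circuit_is_circuit_general {V : Type} [Fintype V] [DecidableEq V]
    (A : Matrix V V (ZMod 2)) (v : V) :
    ¬ iasIndep A (neighborhoodCircuit A v) ∧
    ∀ S : Set (V ⊕ V ⊕ V), S ⊂ neighborhoodCircuit A v → iasIndep A S := by
  refine ⟨?_, fun S hS => iasIndep_of_ssubset_neighborhoodCircuit A v hS⟩
  rw [neighborhoodCircuit_eq_insert, iasIndep_insert_neighborhoodCircuitHead_iff, not_not]

/-- For a non-isolated vertex `v` of a looped simple graph `G`, the neighborhood circuit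
`ζ(v)` is a circuit of the isotropic matroid `M[IAS(G)]`: it is a dependent set of
columns, every proper subset of which is independent. -/
theorem neighborhood_circuit_is_circuit {V : Type} [Fintype V] [DecidableEq V]
    (A : Matrix V V (ZMod 2)) (hA : A.IsSymm) (v : V)
    (hv : ∃ w, w ≠ v ∧ A w v = 1) :
    ¬ iasIndep A (neighborhoodCircuit A v) ∧
    ∀ S : Set (V ⊕ V ⊕ V), S ⊂ neighborhoodCircuit A v → iasIndep A S :=
  neighborhood_circuit_is_circuit_general A v
end

section
/- Let E = (I | A) be a matrix over GF(2) in block form, where A is a square zero-diagonal matrix, with columns partitioned into pairs by the natural 2-partition Ω pairing the i-th column of I with the i-th column of A. If the column matroid of E together with Ω is a 2-sheltering matroid, then A is symmetric. -/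
/-- Columns of the block matrix `E = (I | A)` over GF(2): `Sum.inl i` is the `i`-th
column of the identity block, `Sum.inr j` is the `j`-th column of `A`. -/
def iaCol {n : Type} [DecidableEq n] (A : Matrix n n (ZMod 2)) :
    n ⊕ n → n → ZMod 2
  | Sum.inl i => fun w => if w = i then 1 else 0
  | Sum.inr j => fun w => A w j

/-- Independence of a set of columns of `(I | A)`. -/
def iaIndep {n : Type} [DecidableEq n] (A : Matrix n n (ZMod 2))
    (S : Set (n ⊕ n)) : Prop :=
  LinearIndependent (ZMod 2) (S.restrict (iaCol A))

/-!
Write `e_k` and `a_k` for the columns of `I` and of `A`. Suppose `A i j = 1` but `A j i = 0`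
(so `i ≠ j`). The subtransversal `S = {a_j} ∪ {e_k : k ≠ i, j}` is independent, since `a_j`
has a nonzero entry in row `i`, and it avoids the block of `i`. Yet both extensions are
dependent: `S ∪ {e_i}` contains `a_j` together with every `e_k` for `k ≠ j`, and `A j j = 0`;
and `a_i` is supported on the rows `k ≠ i, j`, because `A i i = A j i = 0`.
-/

open Submodule

theorem injOn_sumElim_insert_inr_image_inl {n : Type} {T : Set n} {j : n} (hj : j ∉ T) :
    Set.InjOn (Sum.elim id id) (insert (Sum.inr j) (Sum.inl '' T)) := by
  rw [Set.injOn_insert (by simp)]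
  refine ⟨?_, by simpa using hj⟩
  rintro _ ⟨a, -, rfl⟩ _ ⟨b, -, rfl⟩ hab
  simpa using hab

section ColumnMatroid

variable {n : Type} [DecidableEq n] (A : Matrix n n (ZMod 2))

theorem iaIndep_iff_linearIndepOn (S : Set (n ⊕ n)) :
    iaIndep A S ↔ LinearIndepOn (ZMod 2) (iaCol A) S :=
  Iff.rfl

theorem iaCol_comp_inl [Finite n] : iaCol A ∘ Sum.inl = Pi.basisFun (ZMod 2) n := by
  ext k w
  simp [iaCol, Pi.single_apply]

theorem iaIndep_image_inl [Finite n] (T : Set n) : iaIndep A (Sum.inl '' T) :=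
  LinearIndepOn.image_of_comp Sum.inl (iaCol A) <| by
    rw [iaCol_comp_inl]
    exact (Pi.basisFun (ZMod 2) n).linearIndependent.linearIndepOn T

theorem mem_span_iaCol_image_inl_iff [Finite n] {T : Set n} {v : n → ZMod 2} :
    v ∈ span (ZMod 2) (iaCol A '' (Sum.inl '' T)) ↔ ∀ w ∉ T, v w = 0 := by
  rw [← Set.image_comp, iaCol_comp_inl, Module.Basis.mem_span_image]
  simp [Set.subset_def, not_imp_comm]

theorem iaIndep_insert_inr_image_inl_iff [Finite n] (T : Set n) (j : n) :
    iaIndep A (insert (Sum.inr j) (Sum.inl '' T)) ↔ ∃ w ∉ T, A w j ≠ 0 := by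
  rw [iaIndep_iff_linearIndepOn, linearIndepOn_insert (by simp), mem_span_iaCol_image_inl_iff]
  simp only [← iaIndep_iff_linearIndepOn, iaIndep_image_inl, true_and]
  simp [iaCol]

/-- `Set.InjOn (Sum.elim id id) S` says that `S` is a subtransversal of the blocks
`{Sum.inl i, Sum.inr i}`. -/
def IaTwoSheltering : Prop :=
  ∀ S : Set (n ⊕ n), Set.InjOn (Sum.elim id id) S → iaIndep A S →
    ∀ i : n, (∀ s ∈ S, Sum.elim id id s ≠ i) →
      iaIndep A (insert (Sum.inl i) S) ∨ iaIndep A (insert (Sum.inr i) S)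

end ColumnMatroid

theorem ZMod.eq_of_ne_zero_iff_ne_zero {a b : ZMod 2} (h : a ≠ 0 ↔ b ≠ 0) : a = b := by
  revert a b; decide

theorem ne_zero_of_iaTwoSheltering {n : Type} [Finite n] [DecidableEq n]
    {A : Matrix n n (ZMod 2)} (hdiag : ∀ i, A i i = 0) (hshelt : IaTwoSheltering A)
    {i j : n} (hij : A i j ≠ 0) : A j i ≠ 0 := by
  intro hji
  have hne : i ≠ j := by rintro rfl; exact hij (hdiag i)
  set T : Set n := {i, j}ᶜ
  have hS : iaIndep A (insert (Sum.inr j) (Sum.inl '' T)) :=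
    (iaIndep_insert_inr_image_inl_iff A T j).2 ⟨i, by simp [T], hij⟩
  have havoid : ∀ s ∈ insert (Sum.inr j) (Sum.inl '' T), Sum.elim id id s ≠ i := by
    simp only [Set.forall_mem_insert, Set.forall_mem_image]
    exact ⟨hne.symm, fun k hk => by rintro rfl; simp [T] at hk⟩
  rcases hshelt _ (injOn_sumElim_insert_inr_image_inl (by simp [T])) hS i havoid with h | h
  · rw [Set.insert_comm, ← Set.image_insert_eq, iaIndep_insert_inr_image_inl_iff] at h
    obtain ⟨w, hw, hwj⟩ := h
    obtain rfl : w = j := by simp_all [T]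
    exact hwj (hdiag w)
  · obtain ⟨w, hw, hwi⟩ := (iaIndep_insert_inr_image_inl_iff A T i).1
      (LinearIndepOn.mono h (Set.insert_subset_insert (Set.subset_insert _ _)))
    obtain rfl | rfl : w = i ∨ w = j := by simpa [T, or_iff_not_imp_left] using hw
    exacts [hwi (hdiag w), hwi hji]

/-- Let `E = (I | A)` over GF(2) with `A` square and zero-diagonal, with columns
partitioned into pairs by the natural 2-partition `Ω` (pairing the `i`-th column of `I`
with the `i`-th column of `A`).  If the column matroid of `E` together with `Ω` is a
2-sheltering matroid, then `A` is symmetric. -/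
theorem two_sheltering_implies_symmetric {n : Type} [Fintype n] [DecidableEq n]
    (A : Matrix n n (ZMod 2)) (hdiag : ∀ i, A i i = 0)
    (hshelt : ∀ S : Set (n ⊕ n), Set.InjOn (Sum.elim id id) S → iaIndep A S →
      ∀ i : n, (∀ s ∈ S, Sum.elim id id s ≠ i) →
        iaIndep A (insert (Sum.inl i) S) ∨ iaIndep A (insert (Sum.inr i) S)) :
    A.IsSymm :=
  Matrix.IsSymm.ext fun _ _ => ZMod.eq_of_ne_zero_iff_ne_zero
    ⟨ne_zero_of_iaTwoSheltering hdiag hshelt, ne_zero_of_iaTwoSheltering hdiag hshelt⟩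
end

section
/- Let E = (I | A) be a matrix over GF(2) in block form, where A is a square symmetric zero-diagonal matrix, with columns partitioned into pairs by the natural 2-partition Ω. Then the column matroid of E together with Ω is a 2-sheltering matroid: for every independent subtransversal J and block ω = {x,y} disjoint from J, at least one of J ∪ {x}, J ∪ {y} is an independent set of columns. -/
open Matrix Finsupp

lemma inr_dotProduct_inl_eq_zero {n R : Type*} [Fintype n] [Semiring R] {S : Set (n ⊕ n)}
    (hS : S.InjOn (Sum.elim id id)) {c d : (n ⊕ n) →₀ R} (hc : c ∈ supported R R S)
    (hd : d ∈ supported R R S) : (c ∘ Sum.inr) ⬝ᵥ (d ∘ Sum.inl) = 0 :=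
  Finset.sum_eq_zero fun w _ => by
    by_contra h
    have hcw : Sum.inr w ∈ S := hc (mem_support_iff.2 (left_ne_zero_of_mul h))
    have hdw : Sum.inl w ∈ S := hd (mem_support_iff.2 (right_ne_zero_of_mul h))
    exact Sum.inr_ne_inl (hS hcw hdw rfl)

lemma Matrix.IsSymm.vecMul_eq_mulVec {n α : Type*} [Fintype n] [CommSemiring α]
    {A : Matrix n n α} (hA : A.IsSymm) (v : n → α) : v ᵥ* A = A *ᵥ v := by
  rw [← vecMul_transpose, hA]

section

variable {n : Type} [Fintype n] [DecidableEq n] {A : Matrix n n (ZMod 2)}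

omit [Fintype n] in
lemma iaCol_inl (i : n) : iaCol A (Sum.inl i) = Pi.single i 1 := by
  ext w
  simp [iaCol, Pi.single_apply]

lemma dotProduct_iaCol_inr (v : n → ZMod 2) (j : n) : v ⬝ᵥ iaCol A (Sum.inr j) = (v ᵥ* A) j :=
  rfl

lemma linearCombination_iaCol (c : (n ⊕ n) →₀ ZMod 2) :
    linearCombination (ZMod 2) (iaCol A) c = c ∘ Sum.inl + A *ᵥ (c ∘ Sum.inr) := by
  ext w
  rw [linearCombination_apply, sum_fintype _ _ (by simp)]
  simp [Fintype.sum_sum_type, iaCol, mulVec, dotProduct, mul_comm]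

lemma inr_dotProduct_linearCombination_iaCol_comm (hA : A.IsSymm) {S : Set (n ⊕ n)}
    (hS : S.InjOn (Sum.elim id id)) {c d : (n ⊕ n) →₀ ZMod 2}
    (hc : c ∈ supported (ZMod 2) (ZMod 2) S) (hd : d ∈ supported (ZMod 2) (ZMod 2) S) :
    (c ∘ Sum.inr) ⬝ᵥ linearCombination (ZMod 2) (iaCol A) d =
      (d ∘ Sum.inr) ⬝ᵥ linearCombination (ZMod 2) (iaCol A) c := by
  rw [linearCombination_iaCol, linearCombination_iaCol, dotProduct_add, dotProduct_add,
    inr_dotProduct_inl_eq_zero hS hc hd, inr_dotProduct_inl_eq_zero hS hd hc, zero_add, zero_add,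
    dotProduct_mulVec, hA.vecMul_eq_mulVec, dotProduct_comm]

lemma iaCol_inr_notMem_span (hA : A.IsSymm) {S : Set (n ⊕ n)} (hS : S.InjOn (Sum.elim id id))
    {i : n} (hinl : Sum.inl i ∉ S) (hinr : Sum.inr i ∉ S)
    (hspan : iaCol A (Sum.inl i) ∈ Submodule.span (ZMod 2) (iaCol A '' S)) :
    iaCol A (Sum.inr i) ∉ Submodule.span (ZMod 2) (iaCol A '' S) := by
  intro hspan'
  obtain ⟨c, hc, hce⟩ := (mem_span_image_iff_linearCombination (ZMod 2)).1 hspan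
  obtain ⟨d, hd, hda⟩ := (mem_span_image_iff_linearCombination (ZMod 2)).1 hspan'
  have hci : c (Sum.inl i) = 0 := notMem_support_iff.1 fun h => hinl (hc h)
  have hdi : d (Sum.inr i) = 0 := notMem_support_iff.1 fun h => hinr (hd h)
  have hAc : (A *ᵥ (c ∘ Sum.inr)) i = 1 := by
    simpa [linearCombination_iaCol, iaCol_inl, hci] using congrFun hce i
  have key := inr_dotProduct_linearCombination_iaCol_comm hA hS hc hd
  rw [hce, hda, dotProduct_iaCol_inr, hA.vecMul_eq_mulVec, hAc, iaCol_inl, dotProduct_single,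
    Function.comp_apply, hdi, zero_mul] at key
  exact one_ne_zero key

end

theorem symmetric_gives_two_sheltering_general {n : Type} [Fintype n] [DecidableEq n]
    (A : Matrix n n (ZMod 2)) (hsymm : A.IsSymm) :
    ∀ S : Set (n ⊕ n), Set.InjOn (Sum.elim id id) S → iaIndep A S →
      ∀ i : n, (∀ s ∈ S, Sum.elim id id s ≠ i) →
        iaIndep A (insert (Sum.inl i) S) ∨ iaIndep A (insert (Sum.inr i) S) := by
  intro S hS hSind i hi
  have hinl : Sum.inl i ∉ S := fun h => hi _ h rfl
  have hinr : Sum.inr i ∉ S := fun h => hi _ h rfl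
  by_contra! hdep
  refine iaCol_inr_notMem_span hsymm hS hinl hinr ?_ ?_
  · by_contra h
    exact hdep.1 ((linearIndepOn_insert hinl).2 ⟨hSind, h⟩)
  · by_contra h
    exact hdep.2 ((linearIndepOn_insert hinr).2 ⟨hSind, h⟩)

/-- Let `E = (I | A)` over GF(2) with `A` square, symmetric and zero-diagonal, with
columns partitioned into pairs by the natural 2-partition `Ω`.  Then the column matroid
of `E` together with `Ω` is a 2-sheltering matroid: for every independent subtransversal
`J` and every block `{Sum.inl i, Sum.inr i}` disjoint from `J`, at least one of the two
extensions of `J` by an element of the block is independent. -/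
theorem symmetric_gives_two_sheltering {n : Type} [Fintype n] [DecidableEq n]
    (A : Matrix n n (ZMod 2)) (hsymm : A.IsSymm) (hdiag : ∀ i, A i i = 0) :
    ∀ S : Set (n ⊕ n), Set.InjOn (Sum.elim id id) S → iaIndep A S →
      ∀ i : n, (∀ s ∈ S, Sum.elim id id s ≠ i) →
        iaIndep A (insert (Sum.inl i) S) ∨ iaIndep A (insert (Sum.inr i) S) :=
  symmetric_gives_two_sheltering_general A hsymm
end

section
/- Let Q = (M, Ω) be a 2-sheltering matroid such that the multimatroid Z(Q) is nondegenerate and tight, and suppose M is representable over a field F. Then for every basis B of M that is a transversal of Ω, in any standard representation (I | A) of M with respect to B, the matrix A has all diagonal entries zero (where the diagonal pairs a non-basis element with the basis element of its block), and the rank of M equals |Ω|. -/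
/-!
Tightness forbids swapping one element of an independent transversal `T` for the other element of
its block: for `S = T \ {t}` tightness gives an element `x` of that block with
`r(S + x) = r(S)`, while both `S + t = T` and (if it were independent) `S + u` have rank `|S| + 1`.
Sheltering builds an independent transversal block by block; by the swap property no element can be
added to it, so it is a base and every base has `|Ω|` elements. In a standard representation with
respect to a transversal base `B`, a nonzero diagonal entry at `(u, b)` would make
`(B \ {b}) ∪ {u}` independent, which is exactly such a swap.
-/

/-- The rank of a set `S` in a matroid `M`: the largest cardinality of an independent
subset of `S`. -/
noncomputable def mrank {U : Type} (M : Matroid U) (S : Set U) : ℕ :=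
  sSup {k : ℕ | ∃ J ⊆ S, M.Indep J ∧ J.ncard = k}

theorem mrank_eq_ncard_of_indep {U : Type} [Finite U] {M : Matroid U} {S : Set U}
    (hS : M.Indep S) : mrank M S = S.ncard :=
  IsGreatest.csSup_eq ⟨⟨S, subset_rfl, hS, rfl⟩,
    fun _ ⟨_, hJS, _, hk⟩ => hk ▸ Set.ncard_le_ncard hJS⟩

theorem LinearIndepOn.insert_of_apply_ne_zero {U ι F : Type} [Field F] {φ : U → ι → F}
    {S : Set U} {u : U} {i : ι} (hS : LinearIndepOn F φ S) (hSi : ∀ s ∈ S, φ s i = 0)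
    (hui : φ u i ≠ 0) : LinearIndepOn F φ (insert u S) := by
  have hspan : Submodule.span F (φ '' S) ≤ LinearMap.ker (LinearMap.proj i) :=
    Submodule.span_le.2 <| Set.image_subset_iff.2 hSi
  exact hS.insert fun hu => hui (hspan hu)

section Transversal

variable {U n : Type} (π : U → n) (M : Matroid U)

def IsTransversal (T : Set U) : Prop :=
  Set.InjOn π T ∧ ∀ b : n, ∃ u ∈ T, π u = b

def IsTwoSheltering : Prop :=
  ∀ I : Set U, M.Indep I → Set.InjOn π I →
    ∀ x y : U, x ≠ y → π x = π y → (∀ i ∈ I, π i ≠ π x) →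
      M.Indep (insert x I) ∨ M.Indep (insert y I)

def IsTight [Fintype n] : Prop :=
  ∀ S : Set U, Set.InjOn π S → S.ncard = Fintype.card n - 1 →
    ∀ b : n, (∀ s ∈ S, π s ≠ b) →
      ∃ x : U, π x = b ∧ mrank M (insert x S) = mrank M S

variable {π M}

theorem IsTransversal.ncard_eq [Fintype n] {T : Set U} (hT : IsTransversal π T) :
    T.ncard = Fintype.card n := by
  have himage : π '' T = Set.univ := Set.eq_univ_of_forall hT.2
  rw [← hT.1.ncard_image, himage, Set.ncard_univ, Nat.card_eq_fintype_card]

theorem eq_or_eq_of_fiber_ncard_eq_two {u v w : U} (hfib : {x | π x = π u}.ncard = 2)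
    (huv : u ≠ v) (hv : π v = π u) (hw : π w = π u) : w = u ∨ w = v := by
  have hpair : ({u, v} : Set U) = {x | π x = π u} :=
    Set.eq_of_subset_of_ncard_le (Set.pair_subset rfl hv)
      (by rw [hfib, Set.ncard_pair huv]) (Set.finite_of_ncard_ne_zero (by simp [hfib]))
  exact hpair.symm.subset hw

theorem IsTight.not_indep_insert_diff_singleton [Finite U] [Fintype n] (htight : IsTight π M)
    {T : Set U} (hTM : M.Indep T) (hT : IsTransversal π T) {u t : U}
    (hfib : {x | π x = π u}.ncard = 2) (huT : u ∉ T) (htT : t ∈ T) (hπt : π t = π u) :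
    ¬ M.Indep (insert u (T \ {t})) := by
  intro hswap
  set S := T \ {t}
  have hut : u ≠ t := ne_of_mem_of_not_mem htT huT |>.symm
  have hblock : ∀ x, π x = π u → x = u ∨ x = t := fun x hx =>
    eq_or_eq_of_fiber_ncard_eq_two hfib hut hπt hx
  have hSblock : ∀ s ∈ S, π s ≠ π u := fun s hs hsu =>
    (hblock s hsu).elim (fun h => huT (h ▸ hs.1)) (fun h => hs.2 h)
  have hScard : S.ncard = Fintype.card n - 1 := by
    rw [Set.ncard_sdiff_singleton_of_mem htT, hT.ncard_eq]
  obtain ⟨x, hx, hrank⟩ := htight S (hT.1.mono Set.sdiff_subset) hScard (π u) hSblock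
  have hxS : x ∉ S := fun hxS => hSblock x hxS hx
  have hxM : M.Indep (insert x S) := by
    rcases hblock x hx with rfl | rfl
    · exact hswap
    · rwa [Set.insert_sdiff_singleton, Set.insert_eq_of_mem htT]
  have hSM : M.Indep S := hTM.subset Set.sdiff_subset
  rw [mrank_eq_ncard_of_indep hxM, mrank_eq_ncard_of_indep hSM,
    Set.ncard_insert_of_notMem hxS] at hrank
  omega

theorem IsTwoSheltering.exists_indep_image_eq (hshelter : IsTwoSheltering π M)
    (hπ : ∀ b : n, {u : U | π u = b}.ncard = 2) (s : Finset n) :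
    ∃ I : Set U, M.Indep I ∧ Set.InjOn π I ∧ π '' I = s := by
  classical
  induction s using Finset.induction_on with
  | empty => exact ⟨∅, M.empty_indep, Set.injOn_empty π, by simp⟩
  | @insert b s hb ih =>
    obtain ⟨I, hIM, hIinj, hIimage⟩ := ih
    obtain ⟨x, y, hxy, hfib⟩ := Set.ncard_eq_two.1 (hπ b)
    have hx : π x = b := (hfib ▸ Set.mem_insert x {y} : x ∈ {u | π u = b})
    have hy : π y = b := (hfib ▸ Set.mem_insert_of_mem x rfl : y ∈ {u | π u = b})
    have hIb : ∀ i ∈ I, π i ≠ b := fun i hi hib =>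
      hb (by rw [← Finset.mem_coe, ← hIimage]; exact ⟨i, hi, hib⟩)
    obtain ⟨z, hz, hzM⟩ : ∃ z, π z = b ∧ M.Indep (insert z I) :=
      (hshelter I hIM hIinj x y hxy (hx.trans hy.symm) (hx ▸ hIb)).elim
        (fun h => ⟨x, hx, h⟩) (fun h => ⟨y, hy, h⟩)
    have hzI : z ∉ I := fun hzI => hIb z hzI hz
    refine ⟨insert z I, hzM, ?_, ?_⟩
    · exact (Set.injOn_insert hzI).2 ⟨hIinj, hIimage ▸ hz ▸ hb⟩
    · rw [Set.image_insert_eq, hIimage, hz, Finset.coe_insert]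

theorem IsTwoSheltering.exists_indep_transversal [Fintype n]
    (hshelter : IsTwoSheltering π M) (hπ : ∀ b : n, {u : U | π u = b}.ncard = 2) :
    ∃ T : Set U, M.Indep T ∧ IsTransversal π T := by
  obtain ⟨T, hTM, hTinj, hTimage⟩ := hshelter.exists_indep_image_eq hπ Finset.univ
  exact ⟨T, hTM, hTinj, fun b =>
    (hTimage ▸ Finset.mem_coe.2 (Finset.mem_univ b) : b ∈ π '' T)⟩

theorem IsTight.isBase_of_indep_transversal [Finite U] [Fintype n] (htight : IsTight π M)
    (hπ : ∀ b : n, {u : U | π u = b}.ncard = 2) {T : Set U} (hTM : M.Indep T)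
    (hT : IsTransversal π T) : M.IsBase T := by
  refine hTM.isBase_of_forall_insert fun u hu hinsert => ?_
  obtain ⟨t, htT, hπt⟩ := hT.2 (π u)
  exact htight.not_indep_insert_diff_singleton hTM hT (hπ (π u)) hu.2 htT hπt
    (hinsert.subset (Set.insert_subset_insert Set.sdiff_subset))

end Transversal

theorem tight_two_sheltering_representable_general {U n : Type} [Fintype U] [Fintype n]
    [DecidableEq U] (F : Type) [Field F]
    (π : U → n) (hπ : ∀ b : n, {u : U | π u = b}.ncard = 2)
    (M : Matroid U)
    (shelter : ∀ I : Set U, M.Indep I → Set.InjOn π I →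
      ∀ x y : U, x ≠ y → π x = π y → (∀ i ∈ I, π i ≠ π x) →
        M.Indep (insert x I) ∨ M.Indep (insert y I))
    (tight : ∀ S : Set U, Set.InjOn π S → S.ncard = Fintype.card n - 1 →
      ∀ b : n, (∀ s ∈ S, π s ≠ b) →
        ∃ x : U, π x = b ∧ mrank M (insert x S) = mrank M S) :
    (∀ B : Set U, M.IsBase B → B.ncard = Fintype.card n) ∧
    (∀ B : Set U, M.IsBase B → Set.InjOn π B → (∀ b : n, ∃ u ∈ B, π u = b) →
      ∀ φ : U → (↥B → F),
        (∀ S : Set U, M.Indep S ↔ LinearIndependent F (S.restrict φ)) →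
        (∀ b : ↥B, φ ↑b = fun b' => if b' = b then 1 else 0) →
        ∀ u : U, u ∉ B → ∀ b : ↥B, π ↑b = π u → φ u b = 0) := by
  have htight : IsTight π M := tight
  obtain ⟨T, hTM, hT⟩ := IsTwoSheltering.exists_indep_transversal shelter hπ
  have hTbase := htight.isBase_of_indep_transversal hπ hTM hT
  refine ⟨fun B hB => (hB.ncard_eq_ncard_of_isBase hTbase).trans hT.ncard_eq, ?_⟩
  intro B hB hBinj hBsurj φ hφ hφB u hu b hbu
  have hφb : ∀ s ∈ B \ {↑b}, φ s b = 0 := by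
    rintro s ⟨hsB, hsb⟩
    simp only [hφB ⟨s, hsB⟩, ite_eq_right_iff, one_ne_zero, imp_false]
    rintro rfl
    exact hsb rfl
  by_contra hub
  exact htight.not_indep_insert_diff_singleton hB.indep ⟨hBinj, hBsurj⟩ (hπ (π u)) hu b.2 hbu
    ((hφ _).2 (LinearIndepOn.insert_of_apply_ne_zero ((hφ _).1 (hB.indep.subset Set.sdiff_subset))
      hφb hub))

/-- Let `Q = (M, Ω)` be a 2-sheltering matroid, where the 2-partition `Ω` of the ground
set `U` is given by the fibers of `π : U → n` (each fiber of size 2), such that the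
multimatroid `Z(Q)` (whose independent sets are the independent subtransversals) is
tight, and suppose `M` is representable over a field `F`.  Then:
(1) every base of `M` has cardinality `|Ω|` (so the rank of `M` is `|Ω|`); and
(2) for every base `B` of `M` that is a transversal of `Ω` and every standard
representation `φ : U → (B → F)` of `M` with respect to `B` (the elements of `B` being
sent to the standard basis vectors), the "diagonal" entries vanish: for every `u ∉ B`,
the coordinate of `φ u` at the basis element lying in the same block as `u` is zero. -/
theorem tight_two_sheltering_representable {U n : Type} [Fintype U] [Fintype n]
    [DecidableEq U] [DecidableEq n] (F : Type) [Field F]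
    (π : U → n) (hπ : ∀ b : n, {u : U | π u = b}.ncard = 2)
    (M : Matroid U) (hE : M.E = Set.univ)
    (shelter : ∀ I : Set U, M.Indep I → Set.InjOn π I →
      ∀ x y : U, x ≠ y → π x = π y → (∀ i ∈ I, π i ≠ π x) →
        M.Indep (insert x I) ∨ M.Indep (insert y I))
    (tight : ∀ S : Set U, Set.InjOn π S → S.ncard = Fintype.card n - 1 →
      ∀ b : n, (∀ s ∈ S, π s ≠ b) →
        ∃ x : U, π x = b ∧ mrank M (insert x S) = mrank M S)
    (hrep : ∃ (d : ℕ) (φ : U → Fin d → F),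
      ∀ S : Set U, M.Indep S ↔ LinearIndependent F (S.restrict φ)) :
    (∀ B : Set U, M.IsBase B → B.ncard = Fintype.card n) ∧
    (∀ B : Set U, M.IsBase B → Set.InjOn π B → (∀ b : n, ∃ u ∈ B, π u = b) →
      ∀ φ : U → (↥B → F),
        (∀ S : Set U, M.Indep S ↔ LinearIndependent F (S.restrict φ)) →
        (∀ b : ↥B, φ ↑b = fun b' => if b' = b then 1 else 0) →
        ∀ u : U, u ∉ B → ∀ b : ↥B, π ↑b = π u → φ u b = 0) :=
  tight_two_sheltering_representable_general F π hπ M shelter tight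
end

section
/- Let G be a looped simple graph with a vertex v, and let G_ℓ^v be the graph obtained from G by complementing the loop status of v. Then the bijection of W(G) that swaps χ(v) ↔ ψ(v) and fixes all other elements is an isomorphism of isotropic matroids M[IAS(G)] → M[IAS(G_ℓ^v)]. -/
/-! Toggling the loop at `v` adds the identity column `φ(v)` to `χ(v)`; over GF(2) this turns
`χ(v)` into `ψ(v)` and `ψ(v)` into `χ(v)`, and leaves every other column alone. The swap of
`χ(v)` and `ψ(v)` therefore carries the columns of `IAS(G)` onto those of `IAS(G_ℓ^v)`, and a
relabelling of the ground set that preserves columns preserves linear independence. -/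

theorem linearIndependent_domRestrict_image_iff {ι R M : Type*} [Semiring R] [AddCommMonoid M]
    [Module R M] (e : ι ≃ ι) {f g : ι → M} (hfg : ∀ x, g (e x) = f x) (S : Set ι) :
    LinearIndependent R (S.domRestrict f) ↔ LinearIndependent R ((e '' S).domRestrict g) := by
  have hcomp : (e '' S).domRestrict g ∘ Equiv.Set.image e S e.injective = S.domRestrict f :=
    funext fun x => hfg x
  rw [← linearIndependent_equiv (Equiv.Set.image e S e.injective), hcomp]

theorem iasCol_toggleLoop_swap {V : Type} [DecidableEq V] (A : Matrix V V (ZMod 2)) (v : V)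
    (x : V ⊕ V ⊕ V) :
    iasCol (fun w x => A w x + (if w = v ∧ x = v then 1 else 0))
      (Equiv.swap (Sum.inr (Sum.inl v)) (Sum.inr (Sum.inr v)) x) = iasCol A x := by
  rcases x with w | w | w
  · rw [Equiv.swap_apply_of_ne_of_ne (by simp) (by simp)]
    rfl
  all_goals
    funext u
    by_cases hw : w = v
    · subst hw
      simp [iasCol, add_assoc, CharTwo.add_self_eq_zero]
    · rw [Equiv.swap_apply_of_ne_of_ne (by simp [hw]) (by simp [hw])]
      simp [iasCol, hw]

theorem loop_complement_isotropic_iso_general {V : Type} [DecidableEq V]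
    (A : Matrix V V (ZMod 2)) (v : V)
    (A' : Matrix V V (ZMod 2))
    (hA' : A' = fun w x => A w x + (if w = v ∧ x = v then 1 else 0)) :
    ∀ S : Set (V ⊕ V ⊕ V),
      iasIndep A S ↔
      iasIndep A' ((Equiv.swap (Sum.inr (Sum.inl v) : V ⊕ V ⊕ V) (Sum.inr (Sum.inr v))) '' S) := by
  subst hA'
  exact linearIndependent_domRestrict_image_iff _ (iasCol_toggleLoop_swap A v)

/-- Loop complementation at `v` induces an isomorphism of isotropic matroids
`M[IAS(G)] → M[IAS(G_ℓ^v)]`, given by the bijection of `W(G)` swapping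
`χ(v) ↔ ψ(v)` and fixing all other elements. -/
theorem loop_complement_isotropic_iso {V : Type} [Fintype V] [DecidableEq V]
    (A : Matrix V V (ZMod 2)) (hA : A.IsSymm) (v : V)
    (A' : Matrix V V (ZMod 2))
    (hA' : A' = fun w x => A w x + (if w = v ∧ x = v then 1 else 0)) :
    ∀ S : Set (V ⊕ V ⊕ V),
      iasIndep A S ↔
      iasIndep A' ((Equiv.swap (Sum.inr (Sum.inl v) : V ⊕ V ⊕ V) (Sum.inr (Sum.inr v))) '' S) :=
  loop_complement_isotropic_iso_general A v A' hA'
end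

section
/- Let G be a looped simple graph with an unlooped vertex v, and let G_ns^v be the non-simple local complement of G at v (complement adjacency between every pair of distinct neighbors of v and complement the loop status of every neighbor of v). Then the bijection of ground sets that swaps φ(v) ↔ ψ(v) and otherwise sends φ(w) ↦ φ(w), χ(w) ↦ χ(w), ψ(w) ↦ ψ(w) is an isomorphism of binary matroids M[IAS(G)] → M[IAS(G_ns^v)]. -/
/-!
Adding the `v`-th row of `IAS(G)` to every row indexed by a neighbour of `v` is the injective
linear map `c ↦ c + c v • a`, where `a` is the `v`-th column of `A`; it is injective because
`a v = 0`. It sends the column `φ(v) = e_v` to `a + e_v = ψ(v)`, the column `ψ(v) = a + e_v`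
to `2a + e_v = e_v = φ(v)`, and, since `A' = A + a aᵀ` with `A` symmetric, every other column
of `IAS(G)` to the column with the same label in `IAS(G_ns^v)`. Injective linear maps preserve
and reflect linear independence.
-/

open Function

theorem linearIndepOn_image_iff_of_comp_eq {R ι ι' M N : Type*} [Semiring R]
    [AddCommMonoid M] [Module R M] [AddCommMonoid N] [Module R N]
    (f : M →ₗ[R] N) (hf : Injective f) (e : ι ≃ ι') {u : ι → M} {u' : ι' → N}
    (h : u' ∘ e = f ∘ u) (S : Set ι) :
    LinearIndepOn R u S ↔ LinearIndepOn R u' (e '' S) := by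
  rw [← linearIndepOn_equiv, h, f.linearIndepOn_iff_of_injOn hf.injOn]

def addSMulCoord {R V : Type*} [CommSemiring R] (a : V → R) (v : V) :
    (V → R) →ₗ[R] (V → R) :=
  LinearMap.id + (LinearMap.proj v).smulRight a

theorem addSMulCoord_apply {R V : Type*} [CommSemiring R] (a : V → R) (v : V) (c : V → R)
    (w : V) : addSMulCoord a v c w = c w + c v * a w := rfl

theorem addSMulCoord_injective {R V : Type*} [CommRing R] {a : V → R} {v : V}
    (hav : a v = 0) : Injective (addSMulCoord a v) := by
  refine (injective_iff_map_eq_zero _).mpr fun c hc => ?_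
  have hcv : c v = 0 := by simpa [addSMulCoord_apply, hav] using congrFun hc v
  funext w
  simpa [addSMulCoord_apply, hcv] using congrFun hc w

theorem addSMulCoord_iasCol {V : Type} [DecidableEq V] {A : Matrix V V (ZMod 2)}
    (hA : A.IsSymm) {v : V} (hv : A v v = 0) (s : V ⊕ V ⊕ V) :
    addSMulCoord (fun w => A w v) v (iasCol A s) =
      iasCol (fun w x => A w x + A w v * A x v)
        (Equiv.swap (Sum.inl v : V ⊕ V ⊕ V) (Sum.inr (Sum.inr v)) s) := by
  have hsym : ∀ w, A v w = A w v := fun w => hA.apply w v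
  funext u
  rcases s with w | w | w
  · by_cases hw : w = v
    · subst hw
      simp [addSMulCoord_apply, iasCol, hv, add_comm]
    · rw [Equiv.swap_apply_of_ne_of_ne (by simpa using hw) (by simp)]
      simp [addSMulCoord_apply, iasCol, Ne.symm hw]
  · rw [Equiv.swap_apply_of_ne_of_ne (by simp) (by simp)]
    simp [addSMulCoord_apply, iasCol, hsym, mul_comm]
  · by_cases hw : w = v
    · subst hw
      simp only [addSMulCoord_apply, iasCol, Equiv.swap_apply_right, hv, zero_add, if_pos, one_mul]
      rw [add_right_comm, CharTwo.add_self_eq_zero, zero_add]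
    · rw [Equiv.swap_apply_of_ne_of_ne (by simp) (by simpa using hw)]
      simp only [addSMulCoord_apply, iasCol]
      rw [if_neg (Ne.symm hw), add_zero, hsym]
      ring

theorem nonsimple_local_complement_isotropic_iso_general {V : Type} [DecidableEq V]
    (A : Matrix V V (ZMod 2)) (hA : A.IsSymm) (v : V) (hv : A v v = 0)
    (A' : Matrix V V (ZMod 2))
    (hA' : A' = fun w x => A w x + A w v * A x v) :
    ∀ S : Set (V ⊕ V ⊕ V),
      iasIndep A S ↔
      iasIndep A' ((Equiv.swap (Sum.inl v : V ⊕ V ⊕ V) (Sum.inr (Sum.inr v))) '' S) := by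
  subst hA'
  exact linearIndepOn_image_iff_of_comp_eq (addSMulCoord (fun w => A w v) v)
    (addSMulCoord_injective hv) _
    (funext fun s => (addSMulCoord_iasCol hA hv s).symm)

/-- Non-simple local complementation at an unlooped vertex `v` (whose adjacency matrix
is `A' = A + a aᵀ`, `a` the `v` column of `A`) induces an isomorphism of binary matroids
`M[IAS(G)] → M[IAS(G_ns^v)]`, given by the bijection swapping `φ(v) ↔ ψ(v)` and fixing
all other elements of the ground set. -/
theorem nonsimple_local_complement_isotropic_iso {V : Type} [Fintype V] [DecidableEq V]
    (A : Matrix V V (ZMod 2)) (hA : A.IsSymm) (v : V) (hv : A v v = 0)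
    (A' : Matrix V V (ZMod 2))
    (hA' : A' = fun w x => A w x + A w v * A x v) :
    ∀ S : Set (V ⊕ V ⊕ V),
      iasIndep A S ↔
      iasIndep A' ((Equiv.swap (Sum.inl v : V ⊕ V ⊕ V) (Sum.inr (Sum.inr v))) '' S) :=
  nonsimple_local_complement_isotropic_iso_general A hA v hv A' hA'
end

section
/- Let G be a looped simple graph, T a transversal of the vertex triples, X ⊆ V(G) a stable set of G, and suppose T = {φ(v) : v ∉ X} ∪ {χ(x) : x ∈ X unlooped} ∪ {ψ(x) : x ∈ X looped}. Then the nullity of T in M[IAS(G)] (i.e., |T| minus the GF(2)-rank of the corresponding column set of IAS(G)) equals |X|. -/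
/-!
Every column of `T` vanishes on `X`: `φ(v)` for `v ∉ X` is a unit vector off `X`, and for `x ∈ X`
the column `χ(x)` or `ψ(x)` has zero diagonal entry and is otherwise supported in `N(x)`, which
misses `X` because `X` is stable. As the unit vectors `φ(v)`, `v ∉ X`, lie in `T`, the columns of
`T` span exactly the vectors supported in `Xᶜ`, of dimension `|Xᶜ|`. On the other hand `T` picks
one element from each triple `{φ(v), χ(v), ψ(v)}`, so `|T| = |V| = |Xᶜ| + |X|`.
-/

theorem Pi.span_eq_spanSubset_of_single_mem {R η : Type*} [CommSemiring R] [Finite η]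
    [DecidableEq η]
    {S : Set (η → R)} {s : Set η} (hS : ∀ f ∈ S, ∀ i ∉ s, f i = 0)
    (hsingle : ∀ i ∈ s, Pi.single i 1 ∈ S) :
    Submodule.span R S = Pi.spanSubset R s := by
  refine le_antisymm (Submodule.span_le.mpr fun f hf => Pi.mem_spanSubset_iff.mpr (hS f hf)) ?_
  refine Submodule.span_mono ?_
  rintro _ ⟨i, hi, rfl⟩
  simpa using hsingle i hi

theorem zmod_two_eq_one_of_ne_zero {a : ZMod 2} (ha : a ≠ 0) : a = 1 := by
  fin_cases a
  · exact absurd rfl ha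
  · rfl

section StableTransversal

variable {V : Type} (A : Matrix V V (ZMod 2)) (X : Set V)

open Classical in
noncomputable def stableTransversal (v : V) : V ⊕ V ⊕ V :=
  if v ∈ X then (if A v v = 0 then Sum.inr (Sum.inl v) else Sum.inr (Sum.inr v)) else Sum.inl v

theorem stableTransversal_injective : Function.Injective (stableTransversal A X) := by
  refine Function.LeftInverse.injective (g := Sum.elim id (Sum.elim id id)) fun v => ?_
  unfold stableTransversal
  split_ifs <;> rfl

theorem range_stableTransversal :
    Set.range (stableTransversal A X) =
      (fun v : V => (Sum.inl v : V ⊕ V ⊕ V)) '' Xᶜ ∪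
        (fun v : V => (Sum.inr (Sum.inl v) : V ⊕ V ⊕ V)) '' {x ∈ X | A x x = 0} ∪
        (fun v : V => (Sum.inr (Sum.inr v) : V ⊕ V ⊕ V)) '' {x ∈ X | A x x = 1} := by
  ext t
  constructor
  · rintro ⟨v, rfl⟩
    unfold stableTransversal
    split_ifs with hv hv0
    · exact .inl (.inr ⟨v, ⟨hv, hv0⟩, rfl⟩)
    · exact .inr ⟨v, ⟨hv, zmod_two_eq_one_of_ne_zero hv0⟩, rfl⟩
    · exact .inl (.inl ⟨v, hv, rfl⟩)
  · rintro ((⟨v, hv, rfl⟩ | ⟨v, ⟨hv, hv0⟩, rfl⟩) | ⟨v, ⟨hv, hv1⟩, rfl⟩) <;>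
      exact ⟨v, by simp_all [stableTransversal]⟩

theorem iasCol_stableTransversal_of_notMem [DecidableEq V] {v : V} (hv : v ∉ X) :
    iasCol A (stableTransversal A X v) = Pi.single v 1 := by
  ext w
  simp [stableTransversal, hv, iasCol, Pi.single_apply]

theorem iasCol_stableTransversal_apply_eq_zero [DecidableEq V]
    (hstable : ∀ x ∈ X, ∀ y ∈ X, x ≠ y → A x y = 0) (v : V) {w : V} (hw : w ∈ X) :
    iasCol A (stableTransversal A X v) w = 0 := by
  by_cases hv : v ∈ X
  swap
  · rw [iasCol_stableTransversal_of_notMem A X hv, Pi.single_eq_of_ne (hw.ne_of_notMem hv)]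
  obtain rfl | hwv := eq_or_ne w v
  · rw [stableTransversal, if_pos hw]
    split_ifs with hw0
    · exact hw0
    · simp only [iasCol, if_true, zmod_two_eq_one_of_ne_zero hw0, CharTwo.add_self_eq_zero]
  · rw [stableTransversal, if_pos hv]
    split_ifs <;> simp [iasCol, hwv, hstable w hw v hv hwv]

theorem span_iasCol_range_stableTransversal [Finite V] [DecidableEq V]
    (hstable : ∀ x ∈ X, ∀ y ∈ X, x ≠ y → A x y = 0) :
    Submodule.span (ZMod 2) (iasCol A '' Set.range (stableTransversal A X)) =
      Pi.spanSubset (ZMod 2) Xᶜ := by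
  refine Pi.span_eq_spanSubset_of_single_mem ?_ fun v hv =>
    ⟨stableTransversal A X v, Set.mem_range_self v, iasCol_stableTransversal_of_notMem A X hv⟩
  rintro _ ⟨_, ⟨v, rfl⟩, rfl⟩ w hw
  exact iasCol_stableTransversal_apply_eq_zero A X hstable v (not_not.mp hw)

end StableTransversal

theorem stable_set_transversal_nullity_general {V : Type} [Fintype V] [DecidableEq V]
    (A : Matrix V V (ZMod 2))
    (X : Set V) (hstable : ∀ x ∈ X, ∀ y ∈ X, x ≠ y → A x y = 0)
    (T : Set (V ⊕ V ⊕ V))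
    (hT : T = (fun v : V => (Sum.inl v : V ⊕ V ⊕ V)) '' Xᶜ ∪
              (fun v : V => (Sum.inr (Sum.inl v) : V ⊕ V ⊕ V)) '' {x ∈ X | A x x = 0} ∪
              (fun v : V => (Sum.inr (Sum.inr v) : V ⊕ V ⊕ V)) '' {x ∈ X | A x x = 1}) :
    T.ncard =
      Module.finrank (ZMod 2) (Submodule.span (ZMod 2) (iasCol A '' T)) + X.ncard := by
  rw [← range_stableTransversal] at hT
  subst hT
  rw [span_iasCol_range_stableTransversal A X hstable, Pi.dim_spanSubset,
    Set.ncard_range_of_injective (stableTransversal_injective A X), Set.ncard_compl_add_ncard]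

/-- Let `X` be a stable set of a looped simple graph `G` and let
`T = {φ(v) : v ∉ X} ∪ {χ(x) : x ∈ X unlooped} ∪ {ψ(x) : x ∈ X looped}` be the associated
transversal of the vertex triples.  Then the nullity of `T` in `M[IAS(G)]`, i.e. `|T|`
minus the GF(2)-rank of the corresponding set of columns of `IAS(G)`, equals `|X|`. -/
theorem stable_set_transversal_nullity {V : Type} [Fintype V] [DecidableEq V]
    (A : Matrix V V (ZMod 2)) (hA : A.IsSymm)
    (X : Set V) (hstable : ∀ x ∈ X, ∀ y ∈ X, x ≠ y → A x y = 0)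
    (T : Set (V ⊕ V ⊕ V))
    (hT : T = (fun v : V => (Sum.inl v : V ⊕ V ⊕ V)) '' Xᶜ ∪
              (fun v : V => (Sum.inr (Sum.inl v) : V ⊕ V ⊕ V)) '' {x ∈ X | A x x = 0} ∪
              (fun v : V => (Sum.inr (Sum.inr v) : V ⊕ V ⊕ V)) '' {x ∈ X | A x x = 1}) :
    T.ncard =
      Module.finrank (ZMod 2) (Submodule.span (ZMod 2) (iasCol A '' T)) + X.ncard :=
  stable_set_transversal_nullity_general A X hstable T hT
end
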